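/- arXiv:math/0604545 — 7 statements merged into one kernel-verified Lean document; each statement's English description precedes it below -/
import Mathlib

section
/- Let $\bar{k}$ be an algebraically closed field of characteristic different from $2$ and let $\Omega$ be the $3\times 3$ matrix with rows $(0,-1/2,0)$, $(-1/2,0,0)$, $(0,0,1)$. Then the group $\mathbf{SO}_3(\Omega)$ of matrices $A$ over $\bar{k}$ with $A^{*}\Omega A=\Omega$ and $\det A = 1$ is generated by the matrices $\begin{pmatrix} a & 0 & 0 \\ 0 & a^{-1} & 0 \\ 0 & 0 & 1 \end{pmatrix}$ for $a \in \bar{k}^{*}$, together with the matrices $\begin{pmatrix} 0 & 1 & 0 \\ 1 & b^{2} & 2b \\ 0 & -b & -1 \end{pmatrix}$ for $b \in \bar{k}$. -/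
open Matrix MatrixGroups

/-- The symmetric matrix Ω with rows (0,-1/2,0), (-1/2,0,0), (0,0,1). -/
def Omega (k : Type*) [Field k] : Matrix (Fin 3) (Fin 3) k :=
  !![0, -(1/2), 0; -(1/2), 0, 0; 0, 0, 1]

/-- The set of generators: the matrices `diag(a, a⁻¹, 1)` for `a ∈ k*` and the
matrices `[[0,1,0],[1,b²,2b],[0,-b,-1]]` for `b ∈ k`, viewed inside `GL₃(k)`. -/
def SO3Generators (k : Type*) [Field k] : Set (GL (Fin 3) k) :=
  {A | (∃ a : k, a ≠ 0 ∧
          (A : Matrix (Fin 3) (Fin 3) k) = !![a, 0, 0; 0, a⁻¹, 0; 0, 0, 1]) ∨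
       (∃ b : k,
          (A : Matrix (Fin 3) (Fin 3) k) = !![0, 1, 0; 1, b ^ 2, 2 * b; 0, -b, -1])}

namespace SO3Aux
variable {k : Type*} [Field k]

def Ngl (b : k) : GL (Fin 3) k :=
  ⟨!![0, 1, 0; 1, b ^ 2, 2 * b; 0, -b, -1],
   !![b ^ 2, 1, 2 * b; 1, 0, 0; -b, 0, -1],
   by ext i j; fin_cases i <;> fin_cases j <;>
      simp [Matrix.mul_apply, Fin.sum_univ_three, Matrix.one_fin_three,
        Matrix.vecHead, Matrix.vecTail] <;> ring,
   by ext i j; fin_cases i <;> fin_cases j <;>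
      simp [Matrix.mul_apply, Fin.sum_univ_three, Matrix.one_fin_three,
        Matrix.vecHead, Matrix.vecTail] <;> ring⟩

def Dgl (a : k) (ha : a ≠ 0) : GL (Fin 3) k :=
  ⟨!![a, 0, 0; 0, a⁻¹, 0; 0, 0, 1],
   !![a⁻¹, 0, 0; 0, a, 0; 0, 0, 1],
   by ext i j; fin_cases i <;> fin_cases j <;>
      simp [Matrix.mul_apply, Fin.sum_univ_three, Matrix.one_fin_three,
        Matrix.vecHead, Matrix.vecTail, mul_inv_cancel₀ ha, inv_mul_cancel₀ ha],
   by ext i j; fin_cases i <;> fin_cases j <;>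
      simp [Matrix.mul_apply, Fin.sum_univ_three, Matrix.one_fin_three,
        Matrix.vecHead, Matrix.vecTail, mul_inv_cancel₀ ha, inv_mul_cancel₀ ha]⟩

lemma Ngl_mem (b : k) : Ngl b ∈ SO3Generators k := Or.inr ⟨b, rfl⟩
lemma Dgl_mem (a : k) (ha : a ≠ 0) : Dgl a ha ∈ SO3Generators k := Or.inl ⟨a, ha, rfl⟩

lemma Ngl_inv_coe (b : k) : (((Ngl b)⁻¹ : GL (Fin 3) k) : Matrix (Fin 3) (Fin 3) k)
    = !![b ^ 2, 1, 2 * b; 1, 0, 0; -b, 0, -1] := rfl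
lemma Dgl_inv_coe (a : k) (ha : a ≠ 0) :
    (((Dgl a ha)⁻¹ : GL (Fin 3) k) : Matrix (Fin 3) (Fin 3) k)
    = !![a⁻¹, 0, 0; 0, a, 0; 0, 0, 1] := rfl
lemma Ngl_coe (b : k) : ((Ngl b : GL (Fin 3) k) : Matrix (Fin 3) (Fin 3) k)
    = !![0, 1, 0; 1, b ^ 2, 2 * b; 0, -b, -1] := rfl
lemma Dgl_coe (a : k) (ha : a ≠ 0) :
    ((Dgl a ha : GL (Fin 3) k) : Matrix (Fin 3) (Fin 3) k)
    = !![a, 0, 0; 0, a⁻¹, 0; 0, 0, 1] := rfl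

def SO3sub (k : Type*) [Field k] : Subgroup (GL (Fin 3) k) where
  carrier := {A | (A : Matrix (Fin 3) (Fin 3) k)ᵀ * Omega k * (A : Matrix (Fin 3) (Fin 3) k)
      = Omega k ∧ (A : Matrix (Fin 3) (Fin 3) k).det = 1}
  one_mem' := by simp
  mul_mem' := by
    rintro A B ⟨hA, hA'⟩ ⟨hB, hB'⟩
    refine ⟨?_, by simp [hA', hB']⟩
    simp only [Units.val_mul, Matrix.transpose_mul]
    calc (B : Matrix (Fin 3) (Fin 3) k)ᵀ * (A : Matrix (Fin 3) (Fin 3) k)ᵀ * Omega k *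
          ((A : Matrix (Fin 3) (Fin 3) k) * (B : Matrix (Fin 3) (Fin 3) k))
        = (B : Matrix (Fin 3) (Fin 3) k)ᵀ * ((A : Matrix (Fin 3) (Fin 3) k)ᵀ * Omega k *
            (A : Matrix (Fin 3) (Fin 3) k)) * (B : Matrix (Fin 3) (Fin 3) k) := by
          noncomm_ring
      _ = Omega k := by rw [hA, hB]
  inv_mem' := by
    rintro A ⟨hA, hA'⟩
    have h1 : (A : Matrix (Fin 3) (Fin 3) k) * ((A⁻¹ : GL (Fin 3) k) : Matrix (Fin 3) (Fin 3) k) = 1 := by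
      rw [← Units.val_mul, mul_inv_cancel]; rfl
    have hdet : ((A⁻¹ : GL (Fin 3) k) : Matrix (Fin 3) (Fin 3) k).det = 1 := by
      have := congrArg Matrix.det h1
      rw [Matrix.det_mul, hA', one_mul] at this
      simpa using this
    refine ⟨?_, hdet⟩
    have ht : ((A⁻¹ : GL (Fin 3) k) : Matrix (Fin 3) (Fin 3) k)ᵀ *
        (A : Matrix (Fin 3) (Fin 3) k)ᵀ = 1 := by
      rw [← Matrix.transpose_mul, h1, Matrix.transpose_one]
    have e : ((A⁻¹ : GL (Fin 3) k) : Matrix (Fin 3) (Fin 3) k)ᵀ *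
        ((A : Matrix (Fin 3) (Fin 3) k)ᵀ * Omega k * (A : Matrix (Fin 3) (Fin 3) k)) *
        ((A⁻¹ : GL (Fin 3) k) : Matrix (Fin 3) (Fin 3) k) =
        ((A⁻¹ : GL (Fin 3) k) : Matrix (Fin 3) (Fin 3) k)ᵀ * Omega k *
        ((A⁻¹ : GL (Fin 3) k) : Matrix (Fin 3) (Fin 3) k) := by rw [hA]
    rw [← e]
    have assoc : ((A⁻¹ : GL (Fin 3) k) : Matrix (Fin 3) (Fin 3) k)ᵀ *
        ((A : Matrix (Fin 3) (Fin 3) k)ᵀ * Omega k * (A : Matrix (Fin 3) (Fin 3) k)) *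
        ((A⁻¹ : GL (Fin 3) k) : Matrix (Fin 3) (Fin 3) k) =
        (((A⁻¹ : GL (Fin 3) k) : Matrix (Fin 3) (Fin 3) k)ᵀ *
          (A : Matrix (Fin 3) (Fin 3) k)ᵀ) * Omega k *
          ((A : Matrix (Fin 3) (Fin 3) k) * ((A⁻¹ : GL (Fin 3) k) : Matrix (Fin 3) (Fin 3) k)) := by
      simp only [mul_assoc]
    rw [assoc, ht, h1, one_mul, mul_one]

theorem gen_sub (h2 : (2:k) ≠ 0) : SO3Generators k ⊆ (SO3sub k : Set (GL (Fin 3) k)) := by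
  rintro A (⟨a, ha, hA⟩ | ⟨b, hA⟩)
  · refine ⟨?_, ?_⟩
    · rw [hA]; ext i j
      fin_cases i <;> fin_cases j <;>
        simp [Omega, Matrix.mul_apply, Fin.sum_univ_three, Matrix.vecHead, Matrix.vecTail,
          mul_inv_cancel₀ ha, inv_mul_cancel₀ ha] <;> (try field_simp) <;> (try ring)
    · rw [hA, Matrix.det_fin_three]; simp [mul_inv_cancel₀ ha]
  · refine ⟨?_, ?_⟩
    · rw [hA]; ext i j
      fin_cases i <;> fin_cases j <;>
        simp [Omega, Matrix.mul_apply, Fin.sum_univ_three, Matrix.vecHead, Matrix.vecTail] <;>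
        (try field_simp) <;> (try ring)
    · rw [hA, Matrix.det_fin_three]; simp

lemma omega_entry (M : Matrix (Fin 3) (Fin 3) k) (i j : Fin 3) :
    (Mᵀ * Omega k * M) i j =
      -(1/2) * (M 0 i * M 1 j + M 1 i * M 0 j) + M 2 i * M 2 j := by
  simp [Omega, Matrix.mul_apply, Fin.sum_univ_three, Matrix.vecHead, Matrix.vecTail]
  ring

lemma key1 (h2 : (2:k) ≠ 0) (M : Matrix (Fin 3) (Fin 3) k)
    (hΩ : Mᵀ * Omega k * M = Omega k) (hdet : M.det = 1)
    (e0 : M 0 0 = 1) (e1 : M 1 0 = 0) (e2 : M 2 0 = 0) :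
    M = !![1, (M 2 1) ^ 2, 2 * (M 2 1); 0, 1, 0; 0, M 2 1, 1] := by
  have q01 := congrFun (congrFun hΩ 0) 1
  have q02 := congrFun (congrFun hΩ 0) 2
  have q11 := congrFun (congrFun hΩ 1) 1
  have q12 := congrFun (congrFun hΩ 1) 2
  rw [omega_entry] at q01 q02 q11 q12
  simp [Omega, e0, e1, e2, Matrix.vecHead, Matrix.vecTail] at q01 q02 q11 q12
  have h12 : M 1 2 = 0 := q02.resolve_left h2
  have h11 : M 1 1 = 1 := by
    field_simp at q01
    first | exact q01 | linear_combination q01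
  rw [h11] at q11 q12
  rw [h12] at q12
  have h22 : M 2 2 = 1 := by
    rw [Matrix.det_fin_three, e0, e1, e2, h11, h12] at hdet
    linear_combination hdet
  rw [h22] at q12
  have h01 : M 0 1 = M 2 1 ^ 2 := by
    field_simp at q11
    have hq : (2:k) * (M 0 1 - M 2 1 ^ 2) = 0 := by linear_combination -q11
    rcases mul_eq_zero.mp hq with h | h
    · exact absurd h h2
    · exact sub_eq_zero.mp h
  have h02 : M 0 2 = 2 * M 2 1 := by
    field_simp at q12
    have hq : (2:k) * (M 0 2 - 2 * M 2 1) = 0 := by linear_combination -2 * q12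
    rcases mul_eq_zero.mp hq with h | h
    · exact absurd h h2
    · exact sub_eq_zero.mp h
  ext i j
  fin_cases i <;> fin_cases j <;>
    simp [e0, e1, e2, h11, h12, h22, h01, h02, Matrix.vecHead, Matrix.vecTail]

/-- common ending: if g ∈ closure and the first column of g⁻¹A is e₁ then A ∈ closure. -/
lemma tail_lemma (h2 : (2:k) ≠ 0) (A g : GL (Fin 3) k)
    (hg : g ∈ Subgroup.closure (SO3Generators k)) (hA : A ∈ SO3sub k)
    (h00 : ((g⁻¹ * A : GL (Fin 3) k) : Matrix (Fin 3) (Fin 3) k) 0 0 = 1)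
    (h10 : ((g⁻¹ * A : GL (Fin 3) k) : Matrix (Fin 3) (Fin 3) k) 1 0 = 0)
    (h20 : ((g⁻¹ * A : GL (Fin 3) k) : Matrix (Fin 3) (Fin 3) k) 2 0 = 0) :
    A ∈ Subgroup.closure (SO3Generators k) := by
  have hgsub : g ∈ SO3sub k := (Subgroup.closure_le (SO3sub k)).mpr (gen_sub h2) hg
  set B : GL (Fin 3) k := g⁻¹ * A with hB
  have hBsub : B ∈ SO3sub k := mul_mem (inv_mem hgsub) hA
  set b : k := (B : Matrix (Fin 3) (Fin 3) k) 2 1 with hb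
  have hBmat := key1 h2 (B : Matrix (Fin 3) (Fin 3) k) hBsub.1 hBsub.2 h00 h10 h20
  rw [← hb] at hBmat
  have hBeq : B = Ngl 0 * Ngl b := by
    apply Units.ext
    rw [hBmat]
    simp only [Units.val_mul]
    rw [Ngl_coe, Ngl_coe]
    ext i j
    fin_cases i <;> fin_cases j <;>
      simp [Matrix.mul_apply, Fin.sum_univ_three, Matrix.vecHead, Matrix.vecTail] <;> ring
  have hAeq : A = g * B := by rw [hB, mul_inv_cancel_left]
  rw [hAeq, hBeq]
  exact mul_mem hg (mul_mem (Subgroup.subset_closure (Ngl_mem 0))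
    (Subgroup.subset_closure (Ngl_mem b)))

end SO3Aux

/-- Over an algebraically closed field of characteristic different from 2, the
group `SO₃(Ω)` of matrices with `Aᵀ Ω A = Ω` and `det A = 1` is generated by the
matrices `diag(a, a⁻¹, 1)` (`a ∈ k*`) and `[[0,1,0],[1,b²,2b],[0,-b,-1]]` (`b ∈ k`). -/
theorem SO3_eq_closure_generators {k : Type*} [Field k] [IsAlgClosed k]
    (h2 : (2 : k) ≠ 0) (A : GL (Fin 3) k) :
    ((A : Matrix (Fin 3) (Fin 3) k)ᵀ * Omega k * (A : Matrix (Fin 3) (Fin 3) k) = Omega k ∧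
        (A : Matrix (Fin 3) (Fin 3) k).det = 1) ↔
      A ∈ Subgroup.closure (SO3Generators k) := by
  open SO3Aux in
  constructor
  · rintro ⟨hΩ, hdet⟩
    have hA : A ∈ SO3sub k := ⟨hΩ, hdet⟩
    set x : k := (A : Matrix (Fin 3) (Fin 3) k) 0 0 with hx
    set y : k := (A : Matrix (Fin 3) (Fin 3) k) 1 0 with hy
    set z : k := (A : Matrix (Fin 3) (Fin 3) k) 2 0 with hz
    have q00 := congrFun (congrFun hΩ 0) 0
    rw [omega_entry] at q00
    simp only [Omega, ← hx, ← hy, ← hz] at q00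
    -- q00 : -(1/2) * (x*y + y*x) + z*z = 0  (roughly)
    have hzz : z * z = x * y := by
      have hq : (2:k) * (z * z - x * y) = 0 := by
        simp [Omega, Matrix.vecHead, Matrix.vecTail] at q00
        field_simp at q00
        first | linear_combination q00 | linear_combination -q00 |
          linear_combination 2 * q00 | linear_combination -2 * q00
      rcases mul_eq_zero.mp hq with h | h
      · exact absurd h h2
      · exact sub_eq_zero.mp h
    by_cases hx0 : x = 0
    · -- first column is (0, y, 0) with y ≠ 0
      have hz0 : z = 0 := by
        have : z * z = 0 := by rw [hzz, hx0, zero_mul]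
        exact mul_self_eq_zero.mp this
      have hy0 : y ≠ 0 := by
        intro h
        have hcol : ∀ i, (A : Matrix (Fin 3) (Fin 3) k) i 0 = 0 := by
          intro i; fin_cases i
          · exact hx0
          · exact h
          · exact hz0
        have := Matrix.det_eq_zero_of_column_eq_zero 0 hcol
        rw [hdet] at this
        exact one_ne_zero this
      have hco : ((((Ngl 0 * Dgl y hy0 : GL (Fin 3) k))⁻¹ * A : GL (Fin 3) k) :
            Matrix (Fin 3) (Fin 3) k) =
            (((Dgl y hy0)⁻¹ : GL (Fin 3) k) : Matrix (Fin 3) (Fin 3) k) *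
            ((((Ngl 0 : GL (Fin 3) k))⁻¹ : GL (Fin 3) k) : Matrix (Fin 3) (Fin 3) k) *
            (A : Matrix (Fin 3) (Fin 3) k) := by
        rw [_root_.mul_inv_rev, Units.val_mul, Units.val_mul]
      apply tail_lemma h2 A (Ngl 0 * Dgl y hy0)
        (mul_mem (Subgroup.subset_closure (Ngl_mem 0))
          (Subgroup.subset_closure (Dgl_mem y hy0))) hA <;>
      · rw [hco, Dgl_inv_coe, Ngl_inv_coe]
        simp [Matrix.mul_apply, Fin.sum_univ_three, Matrix.vecHead, Matrix.vecTail,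
          ← hx, ← hy, ← hz, hx0, hz0, inv_mul_cancel₀ hy0]
    · -- first column is (x, y, z) with x ≠ 0
      have hco : ((((Dgl x hx0 * Ngl (-z) * Ngl 0 : GL (Fin 3) k))⁻¹ * A : GL (Fin 3) k) :
            Matrix (Fin 3) (Fin 3) k) =
            (((Ngl 0 : GL (Fin 3) k)⁻¹ : GL (Fin 3) k) : Matrix (Fin 3) (Fin 3) k) *
            (((Ngl (-z) : GL (Fin 3) k)⁻¹ : GL (Fin 3) k) : Matrix (Fin 3) (Fin 3) k) *
            (((Dgl x hx0)⁻¹ : GL (Fin 3) k) : Matrix (Fin 3) (Fin 3) k) *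
            (A : Matrix (Fin 3) (Fin 3) k) := by
        rw [_root_.mul_inv_rev, _root_.mul_inv_rev, Units.val_mul, Units.val_mul, Units.val_mul]
        simp only [mul_assoc]
      apply tail_lemma h2 A (Dgl x hx0 * Ngl (-z) * Ngl 0)
        (mul_mem (mul_mem (Subgroup.subset_closure (Dgl_mem x hx0))
          (Subgroup.subset_closure (Ngl_mem (-z))))
          (Subgroup.subset_closure (Ngl_mem 0))) hA <;>
      · rw [hco, Dgl_inv_coe, Ngl_inv_coe, Ngl_inv_coe]
        simp only [Matrix.mul_apply, Fin.sum_univ_three]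
        simp [Matrix.vecHead, Matrix.vecTail, ← hx, ← hy, ← hz]
        try field_simp
        try linear_combination x * hzz
        try linear_combination hzz
        try linear_combination -hzz
        try ring
  · intro hcl
    exact (Subgroup.closure_le (SO3sub k)).mpr (gen_sub h2) hcl
end

section
/- Let $k$ be a field of characteristic different from $2$, let $V$ be a finite-dimensional $k$-vector space, and let $u,v,w \colon V \to k$ be linear forms such that the quadratic form $S(x) = w(x)^{2} - u(x)v(x)$ is not the square of a linear form. Then the radical of $S$, namely $\mathrm{rad}(S) = \{x \in V \mid Q(x,y) = 0 \text{ for all } y \in V\}$ where $Q$ is the symmetric bilinear form associated to $S$, is equal to the common zero set $Z(u,v,w) = \{x \in V \mid u(x) = v(x) = w(x) = 0\}$. -/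
/-- If the quadratic form `S = w² - uv` is not the square of a linear form, then
the radical of `S` — the set of `x` with `Q(x,y) = 0` for all `y`, where
`Q(x,y) = w(x)w(y) - ½(u(x)v(y) + u(y)v(x))` is the associated symmetric
bilinear form — equals the common zero set `Z(u,v,w)`. -/
theorem radical_eq_common_zero_set {k V : Type*} [Field k] [AddCommGroup V]
    [Module k V] [FiniteDimensional k V] (h2 : (2 : k) ≠ 0) (u v w : V →ₗ[k] k)
    (hS : ¬ ∃ z : V →ₗ[k] k, ∀ x, w x ^ 2 - u x * v x = z x ^ 2) :
    {x : V | ∀ y : V, w x * w y - (u x * v y + u y * v x) / 2 = 0} =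
      {x : V | u x = 0 ∧ v x = 0 ∧ w x = 0} := by
  ext x
  simp only [Set.mem_setOf_eq]
  constructor
  · intro hx
    have hxx := hx x
    by_cases ha : u x = 0
    · by_cases hb : v x = 0
      · rw [ha, hb] at hxx
        have hw : w x = 0 := by
          have : w x * w x = 0 := by linear_combination hxx
          exact mul_self_eq_zero.mp this
        exact ⟨ha, hb, hw⟩
      · exfalso
        apply hS
        refine ⟨w - (w x / v x) • v, fun y => ?_⟩
        have h1 := hx y
        simp only [LinearMap.sub_apply, LinearMap.smul_apply, smul_eq_mul]
        field_simp
        field_simp at h1 hxx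
        have hxx' : w x * w x = u x * v x := mul_left_cancel₀ h2 (by linear_combination hxx)
        linear_combination (v x * v y) * h1 - (v y ^ 2) * hxx'
    · exfalso
      apply hS
      refine ⟨w - (w x / u x) • u, fun y => ?_⟩
      have h1 := hx y
      simp only [LinearMap.sub_apply, LinearMap.smul_apply, smul_eq_mul]
      field_simp
      field_simp at h1 hxx
      have hxx' : w x * w x = u x * v x := mul_left_cancel₀ h2 (by linear_combination hxx)
      linear_combination (u x * u y) * h1 - (u y ^ 2) * hxx'
  · rintro ⟨hu, hv, hw⟩ y
    rw [hu, hv, hw]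
    ring
end

section
/- Let $k$ be a field of characteristic different from $2$ and let $V$ be a finite-dimensional $k$-vector space. Let $u_1,v_1,w_1$ and $u_2,v_2,w_2$ be linear forms on $V$ such that $w_1(x)^{2} - u_1(x)v_1(x) = w_2(x)^{2} - u_2(x)v_2(x)$ for all $x \in V$, and suppose this common quadratic form $S$ is not the square of a linear form. Then the linear span of $\{u_1,v_1,w_1\}$ in the dual space of $V$ equals the linear span of $\{u_2,v_2,w_2\}$. -/
/-!
The polar form `B` of `S = w² - uv` sends `a` to `2 w(a) w - u(a) v - v(a) u`, so its range lies in
`span {u, v, w}`, and `B` depends only on `S`. Since `B` is symmetric, its range is the annihilator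
of its kernel; and a vector `x` in the kernel of `B` on which `u`, `v`, `w` do not all vanish
exhibits `S` as the square of a linear form. Hence, when `S` is not a square,
`span {u, v, w}` is the range of `B`, which is determined by `S` alone.
-/

open Module

section

variable {k V : Type*} [Field k] [AddCommGroup V] [Module k V]

noncomputable def sqSubMul (u v w : Dual k V) : QuadraticForm k V :=
  LinearMap.BilinMap.toQuadraticMap (w.smulRight w - u.smulRight v)

@[simp]
lemma sqSubMul_apply (u v w : Dual k V) (x : V) : sqSubMul u v w x = w x ^ 2 - u x * v x := by
  simp [sqSubMul, LinearMap.BilinMap.toQuadraticMap_apply, sq]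

lemma polarBilin_sqSubMul_apply (u v w : Dual k V) (a : V) :
    (sqSubMul u v w).polarBilin a = (2 * w a) • w - u a • v - v a • u := by
  ext x
  rw [QuadraticMap.polarBilin_apply_apply, sqSubMul, LinearMap.BilinMap.polar_toQuadraticMap]
  simp
  ring

lemma range_polarBilin_sqSubMul_le_span (u v w : Dual k V) :
    LinearMap.range (sqSubMul u v w).polarBilin ≤ Submodule.span k {u, v, w} := by
  rintro _ ⟨a, rfl⟩
  rw [polarBilin_sqSubMul_apply]
  have mem {f : Dual k V} (hf : f ∈ ({u, v, w} : Set (Dual k V))) (c : k) :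
      c • f ∈ Submodule.span k {u, v, w} :=
    Submodule.smul_mem _ c (Submodule.subset_span hf)
  exact sub_mem (sub_mem (mem (by simp) _) (mem (by simp) _)) (mem (by simp) _)

lemma eq_zero_of_mem_ker_polarBilin_sqSubMul (h2 : (2 : k) ≠ 0) {u v w : Dual k V}
    (hS : ¬ ∃ z : Dual k V, ∀ y, w y ^ 2 - u y * v y = z y ^ 2) {x : V}
    (hx : x ∈ LinearMap.ker (sqSubMul u v w).polarBilin) :
    u x = 0 ∧ v x = 0 ∧ w x = 0 := by
  have hxy (y : V) : 2 * w x * w y = u x * v y + v x * u y := by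
    have := congrArg (· y) (polarBilin_sqSubMul_apply u v w x)
    rw [LinearMap.mem_ker.1 hx] at this
    simp only [LinearMap.zero_apply, LinearMap.sub_apply, LinearMap.smul_apply, smul_eq_mul] at this
    linear_combination -this
  have hcx : w x ^ 2 = u x * v x := mul_left_cancel₀ h2 (by linear_combination hxy x)
  by_contra hne
  apply hS
  obtain hc | hc := ne_or_eq (w x) 0
  · -- `(2 w(x) w)² = (v(x) u + u(x) v)²` and `w(x)² = u(x) v(x)` give `4 w(x)² S = (v(x) u - u(x) v)²`.
    refine ⟨(2 * w x)⁻¹ • (v x • u - u x • v), fun y => ?_⟩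
    simp only [LinearMap.smul_apply, LinearMap.sub_apply, smul_eq_mul]
    field_simp
    linear_combination (2 * w x * w y + u x * v y + v x * u y) * hxy y - 4 * u y * v y * hcx
  · refine ⟨w, fun y => ?_⟩
    suffices u y * v y = 0 by simp [this]
    rw [hc] at hcx hxy
    obtain hux | hux := ne_or_eq (u x) 0
    · have hvx : v x = 0 := by simpa [hux] using hcx.symm
      have hvy : v y = 0 := by simpa [hux, hvx] using (hxy y).symm
      simp [hvy]
    · have hvx : v x ≠ 0 := by tauto
      have huy : u y = 0 := by simpa [hux, hvx] using (hxy y).symm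
      simp [huy]

variable [FiniteDimensional k V]

lemma QuadraticMap.range_polarBilin_eq_dualAnnihilator_ker (Q : QuadraticForm k V) :
    LinearMap.range Q.polarBilin = (LinearMap.ker Q.polarBilin).dualAnnihilator := by
  rw [LinearMap.dualAnnihilator_ker_eq_range_flip]
  congr 1
  ext x y
  exact QuadraticMap.polar_comm Q x y

lemma span_eq_range_polarBilin_sqSubMul (h2 : (2 : k) ≠ 0) {u v w : Dual k V}
    (hS : ¬ ∃ z : Dual k V, ∀ y, w y ^ 2 - u y * v y = z y ^ 2) :
    Submodule.span k {u, v, w} = LinearMap.range (sqSubMul u v w).polarBilin := by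
  refine le_antisymm ?_ (range_polarBilin_sqSubMul_le_span u v w)
  rw [QuadraticMap.range_polarBilin_eq_dualAnnihilator_ker, Submodule.span_le]
  intro f hf
  rw [SetLike.mem_coe, Submodule.mem_dualAnnihilator]
  intro x hx
  obtain ⟨hux, hvx, hwx⟩ := eq_zero_of_mem_ker_polarBilin_sqSubMul h2 hS hx
  rcases hf with rfl | rfl | rfl <;> assumption

end

/-- If `w₁² - u₁v₁ = w₂² - u₂v₂` as quadratic forms and this common quadratic
form is not the square of a linear form, then `span{u₁,v₁,w₁} = span{u₂,v₂,w₂}`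
in the dual space. -/
theorem span_eq_span_of_same_quadratic_form {k V : Type*} [Field k] [AddCommGroup V]
    [Module k V] [FiniteDimensional k V] (h2 : (2 : k) ≠ 0)
    (u₁ v₁ w₁ u₂ v₂ w₂ : V →ₗ[k] k)
    (heq : ∀ x : V, w₁ x ^ 2 - u₁ x * v₁ x = w₂ x ^ 2 - u₂ x * v₂ x)
    (hS : ¬ ∃ z : V →ₗ[k] k, ∀ x, w₁ x ^ 2 - u₁ x * v₁ x = z x ^ 2) :
    Submodule.span k {u₁, v₁, w₁} = Submodule.span k {u₂, v₂, w₂} := by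
  have hS₂ : ¬ ∃ z : V →ₗ[k] k, ∀ x, w₂ x ^ 2 - u₂ x * v₂ x = z x ^ 2 :=
    fun ⟨z, hz⟩ => hS ⟨z, fun x => (heq x).trans (hz x)⟩
  have hQ : sqSubMul u₁ v₁ w₁ = sqSubMul u₂ v₂ w₂ := QuadraticMap.ext fun x => by simpa using heq x
  rw [span_eq_range_polarBilin_sqSubMul h2 hS, hQ, span_eq_range_polarBilin_sqSubMul h2 hS₂]
end

section
/- Let $k$ be a field of characteristic different from $2$, let $V$ be a finite-dimensional $k$-vector space, and let $u_1,v_1,w_1$ and $u_2,v_2,w_2$ be linear forms on $V$ with $w_1(x)^{2} - u_1(x)v_1(x) = w_2(x)^{2} - u_2(x)v_2(x)$ for all $x \in V$. Suppose moreover that $u_1, v_1, w_1$ are linearly independent in the dual space of $V$. Then there exists a $3\times 3$ matrix $A = (A_{ij})$ over $k$ with $A^{*}\Omega A = \Omega$ such that $u_2 = A_{00}u_1 + A_{01}v_1 + A_{02}w_1$, $v_2 = A_{10}u_1 + A_{11}v_1 + A_{12}w_1$, and $w_2 = A_{20}u_1 + A_{21}v_1 + A_{22}w_1$. -/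
/-!
Put `φ = (u₁, v₁, w₁), ψ = (u₂, v₂, w₂) : V → k³` and `Q t = t₂² - t₀t₁`, so that the hypothesis
reads `Q ∘ φ = Q ∘ ψ`. Since `u₁, v₁, w₁` are independent, `φ` is onto, and as the polar form of
`Q` is nondegenerate (here `2 ≠ 0` is needed), the radical of `Q ∘ φ` is exactly `ker φ`. It
contains `ker ψ`, so `u₁, v₁, w₁` lie in the span of `u₂, v₂, w₂`; comparing dimensions, the two
spans coincide, which gives `ψ = A φ` for a matrix `A`. Then `Q ∘ A ∘ φ = Q ∘ φ` and surjectivity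
of `φ` give `Q ∘ A = Q`, i.e. `Aᵀ Ω A = Ω` because `Ω` is the matrix of `Q`.
-/

open Matrix

section

open Module Submodule

theorem QuadraticForm.toMatrix'_toQuadraticForm' {R n : Type*} [CommRing R] [Invertible (2 : R)]
    [Fintype n] [DecidableEq n] {M : Matrix n n R} (hM : M.IsSymm) :
    M.toQuadraticForm'.toMatrix' = M := by
  rw [QuadraticForm.toMatrix', Matrix.toQuadraticForm', QuadraticMap.associated_left_inverse,
    LinearMap.toMatrix'_toLinearMap₂']
  intro x y
  rw [Matrix.toLinearMap₂'_apply', Matrix.toLinearMap₂'_apply', dotProduct_mulVec,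
    ← mulVec_transpose, hM.eq, dotProduct_comm]

theorem Matrix.transpose_mul_mul_eq_of_toQuadraticForm'_comp {R n : Type*} [CommRing R]
    [Invertible (2 : R)] [Fintype n] [DecidableEq n] {M A : Matrix n n R} (hM : M.IsSymm)
    (hA : M.toQuadraticForm'.comp (toLin' A) = M.toQuadraticForm') :
    Aᵀ * M * A = M := by
  have := QuadraticForm.toMatrix'_comp M.toQuadraticForm' (toLin' A)
  rwa [hA, LinearMap.toMatrix'_toLin', QuadraticForm.toMatrix'_toQuadraticForm' hM,
    eq_comm] at this

theorem LinearMap.surjective_pi_of_linearIndependent {k V ι : Type*} [Field k] [AddCommGroup V]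
    [Module k V] [Finite ι] {L : ι → V →ₗ[k] k} (hL : LinearIndependent k L) :
    Function.Surjective (LinearMap.pi L) := by
  rw [← LinearMap.range_eq_top, ← span_eq (LinearMap.range _), LinearMap.coe_range]
  exact span_flip_eq_top_iff_linearIndependent.mpr <|
    hL.map' (LinearMap.ltoFun k V k k) (LinearMap.ker_eq_bot.mpr DFunLike.coe_injective)

theorem QuadraticMap.ker_le_ker_of_comp_eq_comp {R V W N : Type*} [CommRing R] [AddCommGroup V]
    [Module R V] [AddCommGroup W] [Module R W] [AddCommGroup N] [Module R N]
    {Q : QuadraticMap R W N} (hQ : (polarBilin Q).SeparatingLeft) {φ ψ : V →ₗ[R] W}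
    (hφ : Function.Surjective φ) (h : Q.comp φ = Q.comp ψ) :
    LinearMap.ker ψ ≤ LinearMap.ker φ := by
  intro x hx
  refine hQ (φ x) fun s => ?_
  obtain ⟨z, rfl⟩ := hφ s
  calc polar Q (φ x) (φ z) = polar (Q.comp φ) x z := by simp [polar]
    _ = polar (Q.comp ψ) x z := by rw [h]
    _ = 0 := by simp [polar, LinearMap.mem_ker.mp hx]

theorem Submodule.span_range_le_of_ker_pi_le {k V ι : Type*} [Field k] [AddCommGroup V]
    [Module k V] [Finite ι] {L₁ L₂ : ι → V →ₗ[k] k}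
    (h : LinearMap.ker (LinearMap.pi L₂) ≤ LinearMap.ker (LinearMap.pi L₁)) :
    span k (Set.range L₁) ≤ span k (Set.range L₂) := by
  rw [LinearMap.ker_pi, LinearMap.ker_pi] at h
  exact span_le.mpr <| Set.range_subset_iff.mpr fun i =>
    mem_span_of_iInf_ker_le_ker <| h.trans (iInf_le _ i)

theorem Submodule.span_range_eq_of_linearIndependent_of_le {k M ι : Type*} [Field k]
    [AddCommGroup M] [Module k M] [Fintype ι] {v w : ι → M} (hv : LinearIndependent k v)
    (hle : span k (Set.range v) ≤ span k (Set.range w)) :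
    span k (Set.range v) = span k (Set.range w) :=
  have := FiniteDimensional.span_of_finite k (Set.finite_range w)
  eq_of_le_of_finrank_le hle <| (finrank_range_le_card w).trans (finrank_span_eq_card hv).ge

theorem exists_matrix_forall_eq_sum_of_span_range_le {k M ι : Type*} [Field k] [AddCommGroup M]
    [Module k M] [Fintype ι] {v w : ι → M} (h : span k (Set.range w) ≤ span k (Set.range v)) :
    ∃ A : Matrix ι ι k, ∀ i, w i = ∑ j, A i j • v j := by
  choose A hA using fun i => (mem_span_range_iff_exists_fun k).mp (h (subset_span ⟨i, rfl⟩))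
  exact ⟨A, fun i => (hA i).symm⟩

theorem LinearMap.pi_eq_toLin'_comp_pi {k V ι : Type*} [Field k] [AddCommGroup V] [Module k V]
    [Fintype ι] [DecidableEq ι] {L₁ L₂ : ι → V →ₗ[k] k} {A : Matrix ι ι k}
    (hA : ∀ i, L₂ i = ∑ j, A i j • L₁ j) :
    LinearMap.pi L₂ = (toLin' A).comp (LinearMap.pi L₁) := by
  ext x i
  simp [hA, mulVec, dotProduct]

theorem QuadraticMap.exists_matrix_of_comp_pi_eq {k V N ι : Type*} [Field k] [AddCommGroup V]
    [Module k V] [AddCommGroup N] [Module k N] [Fintype ι] [DecidableEq ι]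
    {Q : QuadraticMap k (ι → k) N} (hQ : (polarBilin Q).SeparatingLeft)
    {L₁ L₂ : ι → V →ₗ[k] k} (hL₁ : LinearIndependent k L₁)
    (h : Q.comp (LinearMap.pi L₁) = Q.comp (LinearMap.pi L₂)) :
    ∃ A : Matrix ι ι k, (∀ i, L₂ i = ∑ j, A i j • L₁ j) ∧ Q.comp (toLin' A) = Q := by
  have hsurj := LinearMap.surjective_pi_of_linearIndependent hL₁
  have hspan := span_range_eq_of_linearIndependent_of_le hL₁ <|
    span_range_le_of_ker_pi_le <| ker_le_ker_of_comp_eq_comp hQ hsurj h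
  obtain ⟨A, hA⟩ := exists_matrix_forall_eq_sum_of_span_range_le hspan.ge
  refine ⟨A, hA, QuadraticMap.ext fun t => ?_⟩
  obtain ⟨x, rfl⟩ := hsurj t
  simpa [LinearMap.pi_eq_toLin'_comp_pi hA] using congr($h.symm x)

end

section

variable {k : Type*} [Field k]

theorem isSymm_Omega : (Omega k).IsSymm := by
  ext i j
  fin_cases i <;> fin_cases j <;> rfl

theorem toQuadraticForm'_Omega_apply (h2 : (2 : k) ≠ 0) (t : Fin 3 → k) :
    (Omega k).toQuadraticForm' t = t 2 ^ 2 - t 0 * t 1 := by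
  simp only [toQuadraticForm', Omega, LinearMap.BilinMap.toQuadraticMap_apply,
    toLinearMap₂'_apply', dotProduct, mulVec, Fin.sum_univ_three, of_apply, cons_val',
    cons_val_fin_one, cons_val_zero, cons_val_one, cons_val]
  field_simp
  ring

theorem separatingLeft_polarBilin_toQuadraticForm'_Omega (h2 : (2 : k) ≠ 0) :
    (QuadraticMap.polarBilin (Omega k).toQuadraticForm').SeparatingLeft := by
  intro t ht
  have polar_eq (s : Fin 3 → k) : QuadraticMap.polarBilin (Omega k).toQuadraticForm' t s =
      2 * t 2 * s 2 - t 0 * s 1 - t 1 * s 0 := by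
    simp only [QuadraticMap.polarBilin_apply_apply, QuadraticMap.polar,
      toQuadraticForm'_Omega_apply h2, Pi.add_apply]
    ring
  have ht0 : t 0 = 0 := by simpa [polar_eq] using ht (Pi.single 1 1)
  have ht1 : t 1 = 0 := by simpa [polar_eq] using ht (Pi.single 0 1)
  have ht2 : t 2 = 0 := by simpa [polar_eq, h2] using ht (Pi.single 2 1)
  ext i
  fin_cases i
  exacts [ht0, ht1, ht2]

end

theorem exists_O3_matrix_of_rank_three_general {k V : Type*} [Field k] [AddCommGroup V]
    [Module k V] (h2 : (2 : k) ≠ 0)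
    (u₁ v₁ w₁ u₂ v₂ w₂ : V →ₗ[k] k)
    (heq : ∀ x : V, w₁ x ^ 2 - u₁ x * v₁ x = w₂ x ^ 2 - u₂ x * v₂ x)
    (hli : LinearIndependent k ![u₁, v₁, w₁]) :
    ∃ A : Matrix (Fin 3) (Fin 3) k, Aᵀ * Omega k * A = Omega k ∧
      u₂ = A 0 0 • u₁ + A 0 1 • v₁ + A 0 2 • w₁ ∧
      v₂ = A 1 0 • u₁ + A 1 1 • v₁ + A 1 2 • w₁ ∧
      w₂ = A 2 0 • u₁ + A 2 1 • v₁ + A 2 2 • w₁ := by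
  have := invertibleOfNonzero h2
  have hQ : (Omega k).toQuadraticForm'.comp (LinearMap.pi ![u₁, v₁, w₁]) =
      (Omega k).toQuadraticForm'.comp (LinearMap.pi ![u₂, v₂, w₂]) := by
    ext x
    simpa [toQuadraticForm'_Omega_apply h2] using heq x
  obtain ⟨A, hA, hAQ⟩ := QuadraticMap.exists_matrix_of_comp_pi_eq
    (separatingLeft_polarBilin_toQuadraticForm'_Omega h2) hli hQ
  have hA_row (i : Fin 3) : ![u₂, v₂, w₂] i = A i 0 • u₁ + A i 1 • v₁ + A i 2 • w₁ := by
    simpa [Fin.sum_univ_three] using hA i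
  exact ⟨A, transpose_mul_mul_eq_of_toQuadraticForm'_comp isSymm_Omega hAQ,
    hA_row 0, hA_row 1, hA_row 2⟩

/-- If `w₁² - u₁v₁ = w₂² - u₂v₂` as quadratic forms and `u₁, v₁, w₁` are
linearly independent, then there is a matrix `A ∈ O₃(Ω)` taking the column
triple `(u₁,v₁,w₁)` to `(u₂,v₂,w₂)`. -/
theorem exists_O3_matrix_of_rank_three {k V : Type*} [Field k] [AddCommGroup V]
    [Module k V] [FiniteDimensional k V] (h2 : (2 : k) ≠ 0)
    (u₁ v₁ w₁ u₂ v₂ w₂ : V →ₗ[k] k)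
    (heq : ∀ x : V, w₁ x ^ 2 - u₁ x * v₁ x = w₂ x ^ 2 - u₂ x * v₂ x)
    (hli : LinearIndependent k ![u₁, v₁, w₁]) :
    ∃ A : Matrix (Fin 3) (Fin 3) k, Aᵀ * Omega k * A = Omega k ∧
      u₂ = A 0 0 • u₁ + A 0 1 • v₁ + A 0 2 • w₁ ∧
      v₂ = A 1 0 • u₁ + A 1 1 • v₁ + A 1 2 • w₁ ∧
      w₂ = A 2 0 • u₁ + A 2 1 • v₁ + A 2 2 • w₁ :=
  exists_O3_matrix_of_rank_three_general h2 u₁ v₁ w₁ u₂ v₂ w₂ heq hli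
end

section
/- Let $k$ be a field of characteristic different from $2$ and let $V$ be a finite-dimensional $k$-vector space. Let $u, v$ be linearly independent linear forms on $V$ and let $u_1,v_1,w_1$ be linear forms on $V$ satisfying $w_1(x)^{2} - u_1(x)v_1(x) = -u(x)v(x)$ for all $x \in V$. Then there exists a $3\times 3$ matrix $A = (A_{ij})$ over $k$ with $A^{*}\Omega A = \Omega$ such that $u_1 = A_{00}u + A_{01}v$, $v_1 = A_{10}u + A_{11}v$, and $w_1 = A_{20}u + A_{21}v$; that is, the triple $(u_1,v_1,w_1)$ is obtained from the triple $(u,v,0)$ by the action of an element of $\mathbf{O}_3(\Omega)$. -/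
/-!
Pick `y, z` with `(u, v)(y) = (1, 0)` and `(u, v)(z) = (0, 1)`. The forms `u₁, v₁, w₁` vanish on
`ker u ⊓ ker v`: otherwise a suitable combination of them would be a linear form whose square is a
nonzero multiple of the hyperbolic form `u v`, which is impossible. Hence each of them is
`f y • u + f z • v`. Evaluating the quadratic identity at `y`, `z` and `y + z` says that the
coefficient columns `(u₁, v₁, w₁)(y)` and `(u₁, v₁, w₁)(z)` are `Ω`-isotropic with `Ω`-product
`-1/2`, and such a pair is completed to an element of `O₃(Ω)` by an explicit third column.
-/

open Matrix

section LinearForms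

variable {k V : Type*} [Field k] [AddCommGroup V] [Module k V] {u v : V →ₗ[k] k} {y z : V}

lemma exists_apply_eq_one_and_apply_eq_zero (hli : LinearIndependent k ![u, v]) :
    ∃ y, u y = 1 ∧ v y = 0 := by
  obtain ⟨x, hvx, hux⟩ : ∃ x, v x = 0 ∧ u x ≠ 0 := by
    by_contra! hker
    have hu : u ∈ Submodule.span k (Set.range ![v]) :=
      mem_span_of_iInf_ker_le_ker fun x hx ↦ hker x (by simpa using hx)
    obtain ⟨c, rfl⟩ := Submodule.mem_span_singleton.1 (by simpa using hu)
    exact (linearIndependent_fin2.1 hli).2 c rfl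
  exact ⟨(u x)⁻¹ • x, by simp [hux], by simp [hvx]⟩

lemma eq_smul_add_smul_of_apply_eq_zero (huy : u y = 1) (hvy : v y = 0) (huz : u z = 0)
    (hvz : v z = 1) {f : V →ₗ[k] k} (hf : ∀ x, u x = 0 → v x = 0 → f x = 0) :
    f = f y • u + f z • v := by
  ext x
  have h := hf (x - u x • y - v x • z)
    (by simp only [map_sub, map_smul, smul_eq_mul, huy, huz]; ring)
    (by simp only [map_sub, map_smul, smul_eq_mul, hvy, hvz]; ring)
  simp only [map_sub, map_smul, smul_eq_mul] at h
  simp only [LinearMap.add_apply, LinearMap.smul_apply, smul_eq_mul]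
  linear_combination h

lemma eq_zero_of_forall_sq_eq_neg_mul (huy : u y = 1) (hvy : v y = 0) (huz : u z = 0)
    (hvz : v z = 1) {s : V →ₗ[k] k} {d : k} (hs : ∀ t, s t ^ 2 = -(d * (u t * v t))) :
    d = 0 := by
  have hsy : s y = 0 := pow_eq_zero_iff two_ne_zero |>.1 <| by simpa [huy, hvy] using hs y
  have hsz : s z = 0 := pow_eq_zero_iff two_ne_zero |>.1 <| by simpa [huz, hvz] using hs z
  have h := hs (y + z)
  simp only [map_add, hsy, hsz, huy, hvy, huz, hvz] at h
  linear_combination h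

/-- For `x` in `ker u ⊓ ker v`, the form `a x • c - c x • a` squares to `-(a x)² u v`. -/
lemma apply_eq_zero_of_sq_sub_mul_eq (huy : u y = 1) (hvy : v y = 0) (huz : u z = 0)
    (hvz : v z = 1) {a b c : V →ₗ[k] k} (heq : ∀ x, c x ^ 2 - a x * b x = -(u x * v x))
    {x : V} (hux : u x = 0) (hvx : v x = 0) : a x = 0 := by
  have hx : c x ^ 2 = a x * b x := by linear_combination heq x - v x * hux
  have hpolar (t : V) : 2 * c x * c t = a x * b t + b x * a t := by
    have h := heq (x + t)
    simp only [map_add] at h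
    linear_combination h - heq t - hx - (v x + v t) * hux - u t * hvx
  refine pow_eq_zero_iff two_ne_zero |>.1 <| eq_zero_of_forall_sq_eq_neg_mul huy hvy huz hvz
    (s := a x • c - c x • a) fun t ↦ ?_
  simp only [LinearMap.sub_apply, LinearMap.smul_apply, smul_eq_mul]
  linear_combination (a x) ^ 2 * heq t - (a x * a t) * hpolar t + (a t) ^ 2 * hx

end LinearForms

/-- When the first two columns are `Ω`-isotropic with `Ω`-product `-1/2`, the third column is the
`Ω`-unit vector `Ω`-orthogonal to both. -/
def omegaCompletion {k : Type*} [Field k] (α β γ δ ε ζ : k) : Matrix (Fin 3) (Fin 3) k :=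
  !![α, β, 2 * (β * ε - α * ζ); γ, δ, 2 * (γ * ζ - δ * ε); ε, ζ, β * γ - α * δ]

lemma transpose_mul_Omega_mul_omegaCompletion {k : Type*} [Field k] (h2 : (2 : k) ≠ 0)
    {α β γ δ ε ζ : k} (r1 : ε ^ 2 = α * γ) (r2 : ζ ^ 2 = β * δ)
    (r3 : 2 * ε * ζ = α * δ + β * γ - 1) :
    (omegaCompletion α β γ δ ε ζ)ᵀ * Omega k * omegaCompletion α β γ δ ε ζ = Omega k := by
  rw [omegaCompletion, Omega, ← Matrix.ext_iff]
  simp only [Fin.forall_fin_succ, IsEmpty.forall_iff, and_true, mul_apply, Fin.sum_univ_three,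
    transpose_apply, Fin.isValue, of_apply, cons_val', cons_val_zero, cons_val_fin_one, cons_val_one,
    cons_val, cons_val_succ]
  refine ⟨⟨?_, ?_, ?_⟩, ⟨?_, ?_, ?_⟩, ?_, ?_, ?_⟩ <;> field_simp
  · linear_combination 2 * r1
  · linear_combination r3
  · ring
  · linear_combination r3
  · linear_combination 2 * r2
  · ring
  · ring
  · ring
  · linear_combination (4 * β * δ - 4 * ζ ^ 2) * r1 + (2 * ε * ζ - α * δ - β * γ - 1) * r3

theorem exists_O3_matrix_of_rank_two_general {k V : Type*} [Field k] [AddCommGroup V]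
    [Module k V] (h2 : (2 : k) ≠ 0)
    (u v : V →ₗ[k] k) (hli : LinearIndependent k ![u, v])
    (u₁ v₁ w₁ : V →ₗ[k] k)
    (heq : ∀ x : V, w₁ x ^ 2 - u₁ x * v₁ x = -(u x * v x)) :
    ∃ A : Matrix (Fin 3) (Fin 3) k, Aᵀ * Omega k * A = Omega k ∧
      u₁ = A 0 0 • u + A 0 1 • v ∧
      v₁ = A 1 0 • u + A 1 1 • v ∧
      w₁ = A 2 0 • u + A 2 1 • v := by
  obtain ⟨y, huy, hvy⟩ := exists_apply_eq_one_and_apply_eq_zero hli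
  obtain ⟨z, hvz, huz⟩ :=
    exists_apply_eq_one_and_apply_eq_zero
      (LinearIndependent.pair_symm_iff.mp hli : LinearIndependent k ![v, u])
  have hu₁ (x) := apply_eq_zero_of_sq_sub_mul_eq huy hvy huz hvz heq (x := x)
  have hv₁ (x) := apply_eq_zero_of_sq_sub_mul_eq huy hvy huz hvz (a := v₁) (b := u₁)
    (fun t ↦ by rw [mul_comm (v₁ t)]; exact heq t) (x := x)
  have hw₁ (x) (hux : u x = 0) (hvx : v x = 0) : w₁ x = 0 :=
    pow_eq_zero_iff two_ne_zero |>.1 <| by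
      linear_combination heq x + v₁ x * hu₁ x hux hvx - v x * hux
  have r1 : w₁ y ^ 2 = u₁ y * v₁ y := by linear_combination heq y - u y * hvy
  have r2 : w₁ z ^ 2 = u₁ z * v₁ z := by linear_combination heq z - v z * huz
  have r3 : 2 * w₁ y * w₁ z = u₁ y * v₁ z + u₁ z * v₁ y - 1 := by
    have h := heq (y + z)
    simp only [map_add, huy, hvy, huz, hvz] at h
    linear_combination h - r1 - r2
  exact ⟨_, transpose_mul_Omega_mul_omegaCompletion h2 r1 r2 r3,
    eq_smul_add_smul_of_apply_eq_zero huy hvy huz hvz hu₁,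
    eq_smul_add_smul_of_apply_eq_zero huy hvy huz hvz hv₁,
    eq_smul_add_smul_of_apply_eq_zero huy hvy huz hvz hw₁⟩

/-- If `u, v` are linearly independent linear forms and `w₁² - u₁v₁ = -uv` as
quadratic forms, then there is a matrix `A ∈ O₃(Ω)` taking the column triple
`(u, v, 0)` to `(u₁, v₁, w₁)`. -/
theorem exists_O3_matrix_of_rank_two {k V : Type*} [Field k] [AddCommGroup V]
    [Module k V] [FiniteDimensional k V] (h2 : (2 : k) ≠ 0)
    (u v : V →ₗ[k] k) (hli : LinearIndependent k ![u, v])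
    (u₁ v₁ w₁ : V →ₗ[k] k)
    (heq : ∀ x : V, w₁ x ^ 2 - u₁ x * v₁ x = -(u x * v x)) :
    ∃ A : Matrix (Fin 3) (Fin 3) k, Aᵀ * Omega k * A = Omega k ∧
      u₁ = A 0 0 • u + A 0 1 • v ∧
      v₁ = A 1 0 • u + A 1 1 • v ∧
      w₁ = A 2 0 • u + A 2 1 • v :=
  exists_O3_matrix_of_rank_two_general h2 u v hli u₁ v₁ w₁ heq
end

section
/- Let $\bar{k}$ be an algebraically closed field of characteristic different from $2$, let $g \geq 0$ be an integer, and let $\lambda$ be the linear map sending a linear form on $\bar{k}^{g+2}$ to the polynomial obtained by substituting $X^{i}$ for the $i$-th coordinate variable ($0 \le i \le g+1$). Let $u_1,v_1,w_1$ and $u_2,v_2,w_2$ be linear forms on $\bar{k}^{g+2}$ such that $w_1(x)^{2} - u_1(x)v_1(x) = w_2(x)^{2} - u_2(x)v_2(x)$ for all $x$, and suppose that $F = \lambda(w_1)^{2} - \lambda(u_1)\lambda(v_1)$ is a squarefree polynomial of degree at least $1$. Then there exists a $3\times 3$ matrix $A$ over $\bar{k}$ with $A^{*}\Omega A = \Omega$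 such that the column triple $(u_2,v_2,w_2)$ equals $A$ applied to the column triple $(u_1,v_1,w_1)$; that is, the map $q_{\Omega} \colon t \mapsto w^{2}-uv$ is injective on $\mathbf{O}_3(\Omega)$-orbits of such triples. -/
open Matrix

/-- The linear map λ sending a linear form on `k^(g+2)` to the polynomial of
degree at most `g+1` obtained by substituting `X^i` for the `i`-th coordinate:
`λ(u) = ∑ u(eᵢ) Xⁱ`. -/
noncomputable def lam {k : Type*} [Field k] {g : ℕ}
    (u : (Fin (g + 2) → k) →ₗ[k] k) : Polynomial k :=
  ∑ i : Fin (g + 2), Polynomial.C (u (Pi.single i 1)) * Polynomial.X ^ (i : ℕ)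

/-!
Pulled back along `T x = (u x, v x, w x)`, the bilinear form of `Ω` gives a form on
`k^(g+2)` which, by polarization, is the same for both triples. It has rank at least 2:
otherwise, `k` being algebraically closed, `w₁² - u₁v₁` would be the square of a linear
form `m`, and `F = λ(m)²` could not be squarefree of positive degree. So some `s = T x₀`,
`t = T y₀` span a nondegenerate plane, and `(s, t, Ω⁻¹(s × t))` is a basis of `k³`. The two
bases obtained from the two triples have the same Gram matrix, and after a sign change of the
third vector every `T v` has the same pairings with them, since these pairings are triple
products whose squares are Gram determinants. The isometry carrying one basis to the other
therefore carries `T₁` to `T₂`.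
-/

namespace Matrix

variable {k ι : Type*} [Field k] [Fintype ι] [DecidableEq ι]

theorem of_mul_mul_transpose_apply (r : ι → ι → k) (Ω : Matrix ι ι k) (i j : ι) :
    (of r * Ω * (of r)ᵀ) i j = toLinearMap₂' k Ω (r i) (r j) := by
  rw [toLinearMap₂'_apply', mul_apply, dotProduct_mulVec]
  rfl

theorem of_mul_mulVec_apply (r : ι → ι → k) (Ω : Matrix ι ι k) (x : ι → k) (i : ι) :
    ((of r * Ω) *ᵥ x) i = toLinearMap₂' k Ω (r i) x := by
  rw [toLinearMap₂'_apply', ← mulVec_mulVec]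
  rfl

theorem det_sq_eq_of_gram_eq {Ω : Matrix ι ι k} {r₁ r₂ : ι → ι → k} (hΩ : Ω.det ≠ 0)
    (hr : ∀ i j, toLinearMap₂' k Ω (r₁ i) (r₁ j) = toLinearMap₂' k Ω (r₂ i) (r₂ j)) :
    (of r₁).det ^ 2 = (of r₂).det ^ 2 := by
  have hG : of r₁ * Ω * (of r₁)ᵀ = of r₂ * Ω * (of r₂)ᵀ := by
    ext i j
    rw [of_mul_mul_transpose_apply, of_mul_mul_transpose_apply, hr]
  have h := congrArg det hG
  simp only [det_mul, det_transpose] at h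
  exact mul_right_cancel₀ hΩ (by linear_combination h)

theorem exists_isometry_of_gram_eq {α : Type*} {Ω : Matrix ι ι k} {r₁ r₂ : ι → ι → k}
    (hΩ : Ω.det ≠ 0) (hr₁ : (of r₁).det ≠ 0)
    (hr : ∀ i j, toLinearMap₂' k Ω (r₁ i) (r₁ j) = toLinearMap₂' k Ω (r₂ i) (r₂ j))
    {f₁ f₂ : α → ι → k}
    (hf : ∀ a i, toLinearMap₂' k Ω (r₁ i) (f₁ a) = toLinearMap₂' k Ω (r₂ i) (f₂ a)) :
    ∃ A : Matrix ι ι k, Aᵀ * Ω * A = Ω ∧ ∀ a, A *ᵥ f₁ a = f₂ a := by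
  set R₁ := of r₁
  set R₂ := of r₂
  have hR₂ : R₂.det ≠ 0 := by
    have h := det_sq_eq_of_gram_eq hΩ hr
    intro h0
    exact hr₁ (pow_eq_zero_iff two_ne_zero |>.mp (by rw [h, h0]; ring))
  have hG : R₂ * Ω * R₂ᵀ = R₁ * Ω * R₁ᵀ := by
    ext i j
    rw [of_mul_mul_transpose_apply, of_mul_mul_transpose_apply, hr]
  have hu₁ : IsUnit R₁ᵀ.det := by simpa using hr₁
  have hu₂ : IsUnit (R₂ * Ω).det := by simpa using mul_ne_zero hR₂ hΩ
  refine ⟨R₂ᵀ * R₁ᵀ⁻¹, ?_, fun a => ?_⟩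
  · calc (R₂ᵀ * R₁ᵀ⁻¹)ᵀ * Ω * (R₂ᵀ * R₁ᵀ⁻¹)
        = R₁⁻¹ * (R₂ * Ω * R₂ᵀ) * R₁ᵀ⁻¹ := by
          rw [transpose_mul, transpose_transpose, ← transpose_nonsing_inv, transpose_transpose]
          simp only [Matrix.mul_assoc]
      _ = Ω := by
          rw [hG, Matrix.mul_assoc, mul_nonsing_inv_cancel_right _ _ hu₁,
            nonsing_inv_mul_cancel_left _ _ (isUnit_iff_ne_zero.mpr hr₁)]
  · apply mulVec_injective_of_isUnit ((isUnit_iff_isUnit_det _).mpr hu₂)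
    calc (R₂ * Ω) *ᵥ ((R₂ᵀ * R₁ᵀ⁻¹) *ᵥ f₁ a) = (R₁ * Ω * R₁ᵀ * R₁ᵀ⁻¹) *ᵥ f₁ a := by
          rw [mulVec_mulVec, ← hG]; simp only [Matrix.mul_assoc]
      _ = (R₁ * Ω) *ᵥ f₁ a := by
          rw [Matrix.mul_assoc _ R₁ᵀ, mul_nonsing_inv _ hu₁, Matrix.mul_one]
      _ = (R₂ * Ω) *ᵥ f₂ a := by
          ext i
          rw [of_mul_mulVec_apply, of_mul_mulVec_apply, hf]

end Matrix

theorem LinearMap.eq_or_eq_neg_of_sq_eq {R V : Type*} [CommRing R] [NoZeroDivisors R]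
    [AddCommGroup V] [Module R V] (h2 : (2 : R) ≠ 0) {ℓ₁ ℓ₂ : V →ₗ[R] R}
    (h : ∀ v, ℓ₁ v ^ 2 = ℓ₂ v ^ 2) : ℓ₁ = ℓ₂ ∨ ℓ₁ = -ℓ₂ := by
  have hpm : ∀ v, ℓ₁ v = ℓ₂ v ∨ ℓ₁ v = -ℓ₂ v := fun v => sq_eq_sq_iff_eq_or_eq_neg.mp (h v)
  by_contra! hne
  obtain ⟨a, ha⟩ := DFunLike.ne_iff.mp hne.1
  obtain ⟨b, hb⟩ := DFunLike.ne_iff.mp hne.2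
  have ha' : ℓ₁ a = -ℓ₂ a := (hpm a).resolve_left ha
  have hb' : ℓ₁ b = ℓ₂ b := (hpm b).resolve_right hb
  have hab : 2 * (2 * (ℓ₂ a * ℓ₂ b)) = 0 := by
    have := h (a + b)
    rw [map_add, map_add, ha', hb'] at this
    linear_combination -this
  have hb0 : ℓ₂ b ≠ 0 := fun h0 => hb (by simp [hb', h0])
  have ha0 : ℓ₂ a ≠ 0 := fun h0 => ha (by simp [ha', h0])
  simp [h2, ha0, hb0] at hab

theorem LinearMap.BilinForm.exists_apply_self_eq_sq {k V : Type*} [Field k] [IsAlgClosed k]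
    [AddCommGroup V] [Module k V] (β : LinearMap.BilinForm k V)
    (h : ∀ x y, β x x * β y y = β x y ^ 2) : ∃ m : V →ₗ[k] k, ∀ x, β x x = m x ^ 2 := by
  by_cases hβ : ∀ x, β x x = 0
  · exact ⟨0, fun x => by simp [hβ x]⟩
  obtain ⟨x₀, hx₀⟩ := not_forall.mp hβ
  obtain ⟨s, hs⟩ := IsAlgClosed.exists_eq_mul_self (β x₀ x₀)
  have hs0 : s ≠ 0 := by rintro rfl; exact hx₀ (by simpa using hs)
  refine ⟨s⁻¹ • β x₀, fun x => ?_⟩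
  rw [LinearMap.smul_apply, smul_eq_mul, mul_pow, ← h, hs]
  field_simp

section Omega

variable {k V : Type*} [Field k] [AddCommGroup V] [Module k V]

def omegaForm : LinearMap.BilinForm k (Fin 3 → k) :=
  Matrix.toLinearMap₂' k (Omega k)

theorem omegaForm_apply (x y : Fin 3 → k) :
    omegaForm x y = x 2 * y 2 - (x 0 * y 1 + x 1 * y 0) / 2 := by
  simp only [omegaForm, Omega, toLinearMap₂'_apply', dotProduct, mulVec, of_apply, cons_val',
    cons_val_fin_one, Fin.sum_univ_three, cons_val_zero, cons_val_one, cons_val]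
  ring

theorem omegaForm_comm (x y : Fin 3 → k) : omegaForm x y = omegaForm y x := by
  rw [omegaForm_apply, omegaForm_apply]; ring

theorem det_Omega_ne_zero (h2 : (2 : k) ≠ 0) : (Omega k).det ≠ 0 := by
  simp [Omega, det_fin_three, h2]

/-- `Ω⁻¹ (s × t)`, the `Ω`-normal of the plane spanned by `s` and `t`. -/
def omegaCross (s t : Fin 3 → k) : Fin 3 → k :=
  ![-2 * (s 2 * t 0 - s 0 * t 2), -2 * (s 1 * t 2 - s 2 * t 1), s 0 * t 1 - s 1 * t 0]

theorem omegaForm_omegaCross (h2 : (2 : k) ≠ 0) (s t y : Fin 3 → k) :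
    omegaForm (omegaCross s t) y = det (of ![s, t, y]) := by
  rw [omegaForm_apply, det_fin_three]
  simp only [omegaCross, of_apply, cons_val', cons_val_fin_one, cons_val_zero, cons_val_one,
    cons_val]
  field_simp
  ring

theorem omegaForm_omegaCross_self (h2 : (2 : k) ≠ 0) (s t : Fin 3 → k) :
    omegaForm (omegaCross s t) (omegaCross s t) =
      -4 * (omegaForm s s * omegaForm t t - omegaForm s t ^ 2) := by
  simp only [omegaForm_apply, omegaCross, cons_val_zero, cons_val_one, cons_val]
  field_simp
  ring

theorem omegaForm_omegaCross_left (h2 : (2 : k) ≠ 0) (s t : Fin 3 → k) :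
    omegaForm (omegaCross s t) s = 0 := by
  rw [omegaForm_omegaCross h2]
  exact det_zero_of_row_eq (i := 0) (j := 2) (by decide) rfl

theorem omegaForm_omegaCross_right (h2 : (2 : k) ≠ 0) (s t : Fin 3 → k) :
    omegaForm (omegaCross s t) t = 0 := by
  rw [omegaForm_omegaCross h2]
  exact det_zero_of_row_eq (i := 1) (j := 2) (by decide) rfl

/-- Pairing with `omegaCross` is a triple product, whose square is a Gram determinant. -/
theorem exists_sq_eq_one_omegaForm_omegaCross (h2 : (2 : k) ≠ 0) {T₁ T₂ : V →ₗ[k] Fin 3 → k}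
    (hT : ∀ x y, omegaForm (T₁ x) (T₁ y) = omegaForm (T₂ x) (T₂ y)) (x₀ y₀ : V) :
    ∃ ε : k, ε ^ 2 = 1 ∧ ∀ v, omegaForm (omegaCross (T₁ x₀) (T₁ y₀)) (T₁ v) =
      ε * omegaForm (omegaCross (T₂ x₀) (T₂ y₀)) (T₂ v) := by
  have hsq : ∀ v, ((omegaForm (omegaCross (T₁ x₀) (T₁ y₀))).comp T₁) v ^ 2 =
      ((omegaForm (omegaCross (T₂ x₀) (T₂ y₀))).comp T₂) v ^ 2 := by
    intro v
    simp only [LinearMap.comp_apply, omegaForm_omegaCross h2]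
    refine det_sq_eq_of_gram_eq (det_Omega_ne_zero h2) fun i j => ?_
    fin_cases i <;> fin_cases j <;> exact hT _ _
  rcases LinearMap.eq_or_eq_neg_of_sq_eq h2 hsq with h | h
  · exact ⟨1, one_pow 2, fun v => by simpa using LinearMap.congr_fun h v⟩
  · exact ⟨-1, by norm_num, fun v => by simpa using LinearMap.congr_fun h v⟩

theorem exists_omega_isometry (h2 : (2 : k) ≠ 0) {T₁ T₂ : V →ₗ[k] Fin 3 → k}
    (hT : ∀ x y, omegaForm (T₁ x) (T₁ y) = omegaForm (T₂ x) (T₂ y)) {x₀ y₀ : V}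
    (hD : omegaForm (T₁ x₀) (T₁ x₀) * omegaForm (T₁ y₀) (T₁ y₀) -
      omegaForm (T₁ x₀) (T₁ y₀) ^ 2 ≠ 0) :
    ∃ A : Matrix (Fin 3) (Fin 3) k, Aᵀ * Omega k * A = Omega k ∧ ∀ x, A *ᵥ T₁ x = T₂ x := by
  obtain ⟨ε, hε, hn⟩ := exists_sq_eq_one_omegaForm_omegaCross h2 hT x₀ y₀
  set n₁ := omegaCross (T₁ x₀) (T₁ y₀)
  set n₂ := omegaCross (T₂ x₀) (T₂ y₀)
  have hdet : (of ![T₁ x₀, T₁ y₀, n₁]).det ≠ 0 := by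
    rw [← omegaForm_omegaCross h2, omegaForm_omegaCross_self h2]
    refine mul_ne_zero ?_ hD
    rw [show (-4 : k) = -(2 * 2) by norm_num, neg_ne_zero]
    exact mul_ne_zero h2 h2
  have hnn : omegaForm n₁ n₁ = omegaForm (ε • n₂) (ε • n₂) := by
    simp only [map_smul, LinearMap.smul_apply, smul_eq_mul, n₁, n₂,
      omegaForm_omegaCross_self h2, hT]
    linear_combination (4 * (omegaForm (T₂ x₀) (T₂ x₀) * omegaForm (T₂ y₀) (T₂ y₀) -
      omegaForm (T₂ x₀) (T₂ y₀) ^ 2)) * hε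
  refine exists_isometry_of_gram_eq (r₂ := ![T₂ x₀, T₂ y₀, ε • n₂]) (det_Omega_ne_zero h2)
    hdet (fun i j => ?_) (fun v i => ?_)
  · change omegaForm _ _ = omegaForm _ _
    fin_cases i <;> fin_cases j <;>
      simp only [Fin.zero_eta, Fin.mk_one, Fin.reduceFinMk, cons_val, hT, hnn, map_smul,
        LinearMap.smul_apply, omegaForm_comm _ n₁, omegaForm_comm _ n₂, n₁, n₂,
        omegaForm_omegaCross_left h2, omegaForm_omegaCross_right h2, smul_zero]
  · fin_cases i
    · exact hT _ _
    · exact hT _ _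
    · change omegaForm n₁ (T₁ v) = omegaForm (ε • n₂) (T₂ v)
      rw [map_smul, LinearMap.smul_apply, smul_eq_mul, hn]

def triple (u v w : V →ₗ[k] k) : V →ₗ[k] Fin 3 → k := LinearMap.pi ![u, v, w]

theorem omegaForm_triple_self (h2 : (2 : k) ≠ 0) (u v w : V →ₗ[k] k) (x : V) :
    omegaForm (triple u v w x) (triple u v w x) = w x ^ 2 - u x * v x := by
  simp only [triple, omegaForm_apply, LinearMap.pi_apply, cons_val_zero, cons_val_one, cons_val]
  field_simp
  ring

theorem omegaForm_triple_eq_of_self_eq (h2 : (2 : k) ≠ 0) {u₁ v₁ w₁ u₂ v₂ w₂ : V →ₗ[k] k}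
    (heq : ∀ x, w₁ x ^ 2 - u₁ x * v₁ x = w₂ x ^ 2 - u₂ x * v₂ x) (x y : V) :
    omegaForm (triple u₁ v₁ w₁ x) (triple u₁ v₁ w₁ y) =
      omegaForm (triple u₂ v₂ w₂ x) (triple u₂ v₂ w₂ y) := by
  have hxy := heq (x + y)
  simp only [map_add] at hxy
  simp only [triple, omegaForm_apply, LinearMap.pi_apply, cons_val_zero, cons_val_one, cons_val]
  field_simp
  linear_combination hxy - heq x - heq y

theorem mulVec_triple (A : Matrix (Fin 3) (Fin 3) k) (u v w : V →ₗ[k] k) (x : V) :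
    A *ᵥ triple u v w x = triple (A 0 0 • u + A 0 1 • v + A 0 2 • w)
      (A 1 0 • u + A 1 1 • v + A 1 2 • w) (A 2 0 • u + A 2 1 • v + A 2 2 • w) x := by
  ext i
  fin_cases i <;> simp [triple, mulVec, dotProduct, Fin.sum_univ_three]

theorem triple_inj {u v w u' v' w' : V →ₗ[k] k} :
    triple u v w = triple u' v' w' ↔ u = u' ∧ v = v' ∧ w = w' := by
  constructor
  · intro h
    refine ⟨?_, ?_, ?_⟩ <;> ext x
    · exact congrFun (LinearMap.congr_fun h x) 0
    · exact congrFun (LinearMap.congr_fun h x) 1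
    · exact congrFun (LinearMap.congr_fun h x) 2
  · rintro ⟨rfl, rfl, rfl⟩
    rfl

end Omega

theorem lam_eval {k : Type*} [Field k] {g : ℕ} (u : (Fin (g + 2) → k) →ₗ[k] k) (r : k) :
    (lam u).eval r = u (fun i => r ^ (i : ℕ)) := by
  have hv : (fun i : Fin (g + 2) => r ^ (i : ℕ)) =
      ∑ i : Fin (g + 2), r ^ (i : ℕ) • Pi.single i (1 : k) := by
    ext j
    simp [Finset.sum_apply, Pi.single_apply]
  rw [lam, Polynomial.eval_finsetSum, hv, map_sum]
  refine Finset.sum_congr rfl fun i _ => ?_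
  rw [map_smul, smul_eq_mul, Polynomial.eval_mul, Polynomial.eval_C, Polynomial.eval_pow,
    Polynomial.eval_X, mul_comm]

theorem exists_omegaForm_triple_gram_det_ne_zero {k : Type*} [Field k] [IsAlgClosed k]
    (h2 : (2 : k) ≠ 0) {g : ℕ} (u v w : (Fin (g + 2) → k) →ₗ[k] k)
    (hsf : Squarefree (lam w ^ 2 - lam u * lam v))
    (hdeg : 1 ≤ (lam w ^ 2 - lam u * lam v).degree) :
    ∃ x₀ y₀, omegaForm (triple u v w x₀) (triple u v w x₀) *
      omegaForm (triple u v w y₀) (triple u v w y₀) -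
        omegaForm (triple u v w x₀) (triple u v w y₀) ^ 2 ≠ 0 := by
  by_contra! h
  obtain ⟨m, hm⟩ := LinearMap.BilinForm.exists_apply_self_eq_sq
    (omegaForm.compl₁₂ (triple u v w) (triple u v w)) fun x y => sub_eq_zero.mp (h x y)
  have hF : lam w ^ 2 - lam u * lam v = lam m ^ 2 := Polynomial.funext fun r => by
    simp only [Polynomial.eval_sub, Polynomial.eval_mul, Polynomial.eval_pow, lam_eval,
      ← omegaForm_triple_self h2]
    exact hm _
  have hm_unit : IsUnit (lam m) := hsf _ ⟨1, by rw [hF]; ring⟩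
  rw [hF, Polynomial.degree_eq_zero_of_isUnit (hm_unit.pow 2)] at hdeg
  exact absurd hdeg (by decide)

/-- Over an algebraically closed field of characteristic ≠ 2: if two triples of
linear forms on `k^(g+2)` give the same quadratic form `w² - uv`, and
`F = λ(w₁)² - λ(u₁)λ(v₁)` is squarefree of degree at least 1, then there exists
`A ∈ O₃(Ω)` taking the column triple `(u₁,v₁,w₁)` to `(u₂,v₂,w₂)`: the map
`q_Ω` is injective on `O₃(Ω)`-orbits of such triples. -/
theorem exists_O3_matrix_of_same_quadratic_form {k : Type*} [Field k] [IsAlgClosed k]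
    (h2 : (2 : k) ≠ 0) (g : ℕ)
    (u₁ v₁ w₁ u₂ v₂ w₂ : (Fin (g + 2) → k) →ₗ[k] k)
    (heq : ∀ x, w₁ x ^ 2 - u₁ x * v₁ x = w₂ x ^ 2 - u₂ x * v₂ x)
    (hsf : Squarefree (lam w₁ ^ 2 - lam u₁ * lam v₁))
    (hdeg : 1 ≤ (lam w₁ ^ 2 - lam u₁ * lam v₁).degree) :
    ∃ A : Matrix (Fin 3) (Fin 3) k, Aᵀ * Omega k * A = Omega k ∧
      u₂ = A 0 0 • u₁ + A 0 1 • v₁ + A 0 2 • w₁ ∧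
      v₂ = A 1 0 • u₁ + A 1 1 • v₁ + A 1 2 • w₁ ∧
      w₂ = A 2 0 • u₁ + A 2 1 • v₁ + A 2 2 • w₁ := by
  obtain ⟨x₀, y₀, hD⟩ := exists_omegaForm_triple_gram_det_ne_zero h2 u₁ v₁ w₁ hsf hdeg
  obtain ⟨A, hA, hAT⟩ :=
    exists_omega_isometry h2 (omegaForm_triple_eq_of_self_eq h2 heq) hD
  have htriple := LinearMap.ext fun x => (hAT x).symm.trans (mulVec_triple A u₁ v₁ w₁ x)
  exact ⟨A, hA, triple_inj.mp htriple⟩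
end

section
/- Let $k$ be a field of characteristic different from $2$, let $V$ be a finite-dimensional $k$-vector space, and let $u,v,w$ and $u',v',w'$ be linear forms on $V$ with $w(x)^{2} - u(x)v(x) = w'(x)^{2} - u'(x)v'(x)$ for all $x \in V$. Then the common zero set $Z(u,v,w) = \{x \in V \mid u(x)=v(x)=w(x)=0\}$ is contained in the radical of the quadratic form $S = w^{2}-uv$; consequently, if in addition $S$ is not the square of a linear form, then $Z(u,v,w) = Z(u',v',w')$. -/
/-- If the radical condition holds at `x` and `S = w² - uv` is not the square of a
linear form, then `x` is a common zero of `u, v, w`. -/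
lemma radical_mem_zero_set {k V : Type*} [Field k] [AddCommGroup V]
    [Module k V] (h2 : (2 : k) ≠ 0) (u v w : V →ₗ[k] k)
    (hns : ¬ ∃ z : V →ₗ[k] k, ∀ x, w x ^ 2 - u x * v x = z x ^ 2)
    (x : V) (hx : ∀ y : V, w x * w y - (u x * v y + u y * v x) / 2 = 0) :
    u x = 0 ∧ v x = 0 ∧ w x = 0 := by
  have hx2 : ∀ y : V, w x * w y * 2 = u x * v y + u y * v x := by
    intro y
    have h := hx y
    rwa [sub_eq_zero, eq_div_iff h2] at h
  have hxx : w x ^ 2 = u x * v x := by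
    refine mul_right_cancel₀ h2 ?_
    linear_combination hx2 x
  by_cases hw : w x = 0
  · have huv : u x * v x = 0 := by linear_combination w x * hw - hxx
    rcases mul_eq_zero.mp huv with hu | hv
    · by_cases hv : v x = 0
      · exact ⟨hu, hv, hw⟩
      · exfalso
        apply hns
        refine ⟨w, fun y => ?_⟩
        have hy := hx2 y
        have huy : u y * v x = 0 := by
          linear_combination -hy + (2 * w y) * hw - v y * hu
        rcases mul_eq_zero.mp huy with h | h
        · rw [h]; ring
        · exact absurd h hv
    · by_cases hu : u x = 0
      · exact ⟨hu, hv, hw⟩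
      · exfalso
        apply hns
        refine ⟨w, fun y => ?_⟩
        have hy := hx2 y
        have hvy : u x * v y = 0 := by
          linear_combination -hy + (2 * w y) * hw - u y * hv
        rcases mul_eq_zero.mp hvy with h | h
        · exact absurd h hu
        · rw [h]; ring
  · exfalso
    apply hns
    refine ⟨(2 * w x)⁻¹ • (u x • v - v x • u), fun y => ?_⟩
    have hy := hx2 y
    have h2w : (2 : k) * w x ≠ 0 := mul_ne_zero h2 hw
    simp only [LinearMap.smul_apply, LinearMap.sub_apply, smul_eq_mul]
    field_simp
    linear_combination (2 * w x * w y + u x * v y + v x * u y) * hy -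
      (4 * (u y * v y)) * hxx

/-- If `w² - uv = w'² - u'v'` as quadratic forms, then the common zero set
`Z(u,v,w)` is contained in the radical of `S = w² - uv` (the set of `x` with
`Q(x,y) = 0` for all `y`, where `Q` is the associated symmetric bilinear form);
consequently, if moreover `S` is not the square of a linear form, then
`Z(u,v,w) = Z(u',v',w')`. -/
theorem zero_set_subset_radical_and_eq {k V : Type*} [Field k] [AddCommGroup V]
    [Module k V] [FiniteDimensional k V] (h2 : (2 : k) ≠ 0)
    (u v w u' v' w' : V →ₗ[k] k)
    (heq : ∀ x : V, w x ^ 2 - u x * v x = w' x ^ 2 - u' x * v' x) :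
    {x : V | u x = 0 ∧ v x = 0 ∧ w x = 0} ⊆
        {x : V | ∀ y : V, w x * w y - (u x * v y + u y * v x) / 2 = 0} ∧
      ((¬ ∃ z : V →ₗ[k] k, ∀ x, w x ^ 2 - u x * v x = z x ^ 2) →
        {x : V | u x = 0 ∧ v x = 0 ∧ w x = 0} =
          {x : V | u' x = 0 ∧ v' x = 0 ∧ w' x = 0}) := by
  have hrad : ∀ x y : V, w x * w y - (u x * v y + u y * v x) / 2 =
      w' x * w' y - (u' x * v' y + u' y * v' x) / 2 := by
    intro x y
    have hxy := heq (x + y)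
    simp only [map_add] at hxy
    have h : 2 * (w x * w y) - (u x * v y + u y * v x) =
        2 * (w' x * w' y) - (u' x * v' y + u' y * v' x) := by
      linear_combination hxy - heq x - heq y
    field_simp [h2]
    linear_combination h
  constructor
  · rintro x ⟨hu, hv, hw⟩ y
    simp [hu, hv, hw]
  · intro hns
    have hns' : ¬ ∃ z : V →ₗ[k] k, ∀ x, w' x ^ 2 - u' x * v' x = z x ^ 2 := by
      rintro ⟨z, hz⟩
      exact hns ⟨z, fun x => (heq x).trans (hz x)⟩
    ext x
    constructor
    · rintro ⟨hu, hv, hw⟩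
      apply radical_mem_zero_set h2 u' v' w' hns' x
      intro y
      rw [← hrad x y]
      simp [hu, hv, hw]
    · rintro ⟨hu, hv, hw⟩
      apply radical_mem_zero_set h2 u v w hns x
      intro y
      rw [hrad x y]
      simp [hu, hv, hw]
end
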